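/- Let w : [0,∞) → ℝ be continuous with w(t) ≥ 0 for all t, and define the undershoot functional f_us on C₀(ℝ₊) by f_us(e) = sup_{t≥0} max(e(t) − w(t), 0). Let μ be a finite signed regular Borel measure on [0,∞). If μ is not a nonnegative measure, or if μ([0,∞)) > 1, then f_us*(μ) = sup_{e ∈ C₀(ℝ₊)} ( ∫₀^∞ e dμ − f_us(e) ) = +∞; and if μ ≥ 0 with μ([0,∞)) ≤ 1, then f_us*(μ) = ∫₀^∞ w dμ (a value in [0,+∞]). -/

import Mathlib

open MeasureTheory
open scoped NNReal ENNReal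

/-- The space `C₀(ℝ₊)` of continuous functions on `[0,∞)` vanishing at infinity. -/
def CZero : Type := {e : ℝ≥0 → ℝ // Continuous e ∧ Filter.Tendsto e Filter.atTop (nhds 0)}

/-- The pairing `∫₀^∞ e dμ` of a bounded measurable function with a finite signed
measure `μ = μ₊ + μ₋` (with `μ₋ ≤ 0`), computed via the Jordan decomposition. -/
noncomputable def pairing (μ : SignedMeasure ℝ≥0) (e : ℝ≥0 → ℝ) : ℝ :=
  (∫ t, e t ∂μ.toJordanDecomposition.posPart) - ∫ t, e t ∂μ.toJordanDecomposition.negPart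

/-!
Since `w ≥ 0`, scaling a test function `g` by `k ≥ 0` gives `f_us(k g) ≤ k · sup g⁺` while the
pairing grows like `k · ∫ g dμ`; so a single `g` with `sup g⁺ < ∫ g dμ` makes the conjugate
infinite. If `μ` has a nonzero negative part, take `-u` for an Urysohn function `u` that is `1`
on a compact set carrying negative mass and vanishes off an open set of smaller positive mass;
if `μ ≥ 0` has mass `> 1`, take a cutoff equal to `1` on a long interval.
For `μ ≥ 0` of mass `≤ 1`, the bound `e ≤ w + f_us(e)` gives `∫ e dμ - f_us(e) ≤ ∫ w dμ`, and the
truncations `w · cutoff n`, on which `f_us` vanishes, reach `∫ w dμ` by monotone convergence.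
-/

open Set

namespace MeasureTheory.SignedMeasure

variable {α : Type*} [MeasurableSpace α]

theorem nonneg_iff_negPart_eq_zero (s : SignedMeasure α) :
    0 ≤ s ↔ s.toJordanDecomposition.negPart = 0 := by
  have hsing := s.toJordanDecomposition.mutuallySingular
  constructor
  · intro hs
    have hS := s.apply_eq_posPart_real_sub_negPart_real hsing.measurableSet_nullSet
    rw [measureReal_def, hsing.measure_nullSet, ENNReal.toReal_zero, zero_sub] at hS
    have hNS : s.toJordanDecomposition.negPart hsing.nullSet = 0 := by
      have h0 : 0 ≤ s hsing.nullSet := by simpa using VectorMeasure.le_iff'.1 hs hsing.nullSet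
      exact (measureReal_eq_zero_iff (measure_ne_top _ _)).1
        (le_antisymm (by linarith) measureReal_nonneg)
    rw [← Measure.measure_univ_eq_zero, ← measure_add_measure_compl hsing.measurableSet_nullSet,
      hNS, hsing.measure_compl_nullSet, add_zero]
  · intro hN
    refine VectorMeasure.le_iff.2 fun i hi => ?_
    rw [s.apply_eq_posPart_real_sub_negPart_real hi, hN]
    simp

theorem apply_eq_posPart_real_of_nonneg {s : SignedMeasure α} (hs : 0 ≤ s) {i : Set α}
    (hi : MeasurableSet i) : s i = s.toJordanDecomposition.posPart.real i := by
  rw [s.apply_eq_posPart_real_sub_negPart_real hi, s.nonneg_iff_negPart_eq_zero.1 hs,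
    measureReal_zero_apply, sub_zero]

end MeasureTheory.SignedMeasure

section Cutoff

noncomputable def cutoff (n : ℕ) (t : ℝ≥0) : ℝ := max 0 (min 1 ((n : ℝ) + 1 - t))

theorem continuous_cutoff (n : ℕ) : Continuous (cutoff n) := by
  unfold cutoff; fun_prop

theorem cutoff_nonneg (n : ℕ) (t : ℝ≥0) : 0 ≤ cutoff n t := le_max_left _ _

theorem cutoff_le_one (n : ℕ) (t : ℝ≥0) : cutoff n t ≤ 1 :=
  max_le zero_le_one (min_le_left _ _)

theorem cutoff_eq_one {n : ℕ} {t : ℝ≥0} (h : (t : ℝ) ≤ n) : cutoff n t = 1 := by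
  rw [cutoff, min_eq_left (by linarith), max_eq_right zero_le_one]

theorem cutoff_mono {m n : ℕ} (h : m ≤ n) (t : ℝ≥0) : cutoff m t ≤ cutoff n t := by
  have : (m : ℝ) ≤ n := Nat.cast_le.2 h
  unfold cutoff; gcongr

theorem hasCompactSupport_cutoff (n : ℕ) : HasCompactSupport (cutoff n) := by
  refine HasCompactSupport.intro (isCompact_Icc (a := 0) (b := (n + 1 : ℝ≥0))) fun t ht => ?_
  have : (n : ℝ) + 1 ≤ t := by
    have := (not_le.1 fun h => ht ⟨zero_le, h⟩).le
    exact_mod_cast this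
  rw [cutoff, max_eq_left ((min_le_right _ _).trans (by linarith))]

theorem iSup_ofReal_cutoff (t : ℝ≥0) : ⨆ n, ENNReal.ofReal (cutoff n t) = 1 := by
  refine le_antisymm (iSup_le fun n => ENNReal.ofReal_le_one.2 (cutoff_le_one n t)) ?_
  obtain ⟨n, hn⟩ := exists_nat_ge (t : ℝ)
  exact le_iSup_of_le n (by rw [cutoff_eq_one hn, ENNReal.ofReal_one])

theorem iSup_lintegral_mul_cutoff (ν : Measure ℝ≥0) {f : ℝ≥0 → ℝ≥0∞} (hf : Measurable f) :
    ⨆ n, ∫⁻ t, f t * ENNReal.ofReal (cutoff n t) ∂ν = ∫⁻ t, f t ∂ν := by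
  rw [← lintegral_iSup (f := fun n t => f t * ENNReal.ofReal (cutoff n t))
    (fun n => hf.mul (continuous_cutoff n).measurable.ennreal_ofReal)
    fun m n hmn t => mul_le_mul_right (ENNReal.ofReal_le_ofReal (cutoff_mono hmn t)) _]
  simp only [← ENNReal.mul_iSup, iSup_ofReal_cutoff, mul_one]

theorem exists_one_lt_integral_cutoff (ν : Measure ℝ≥0) [IsFiniteMeasure ν] (h : 1 < ν univ) :
    ∃ n, 1 < ∫ t, cutoff n t ∂ν := by
  have hsup := iSup_lintegral_mul_cutoff ν (f := 1) measurable_const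
  simp only [Pi.one_apply, one_mul, lintegral_const] at hsup
  obtain ⟨n, hn⟩ := lt_iSup_iff.1 (hsup ▸ h)
  refine ⟨n, ENNReal.one_lt_ofReal.1 ?_⟩
  rwa [ofReal_integral_eq_lintegral_ofReal
    ((continuous_cutoff n).integrable_of_hasCompactSupport (hasCompactSupport_cutoff n))
    (ae_of_all _ (cutoff_nonneg n))]

end Cutoff

theorem exists_integral_lt_integral_of_mutuallySingular {X : Type*} [TopologicalSpace X]
    [T2Space X] [LocallyCompactSpace X] [MeasurableSpace X] [BorelSpace X] {μ ν : Measure X}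
    [IsFiniteMeasure μ] [IsFiniteMeasure ν] [μ.OuterRegular] [ν.InnerRegularCompactLTTop]
    (h : μ ⟂ₘ ν) (hν : ν ≠ 0) :
    ∃ u : X → ℝ, Continuous u ∧ HasCompactSupport u ∧ (∀ x, u x ∈ Icc 0 1) ∧
      ∫ x, u x ∂μ < ∫ x, u x ∂ν := by
  have hS : 0 < ν h.nullSet := by
    refine pos_iff_ne_zero.2 fun h0 => hν ?_
    rw [← Measure.measure_univ_eq_zero, ← measure_add_measure_compl h.measurableSet_nullSet, h0,
      h.measure_compl_nullSet, add_zero]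
  obtain ⟨K, hKS, hK, hνK⟩ := h.measurableSet_nullSet.exists_lt_isCompact_of_ne_top
    (measure_ne_top ν _) hS
  have hμK : μ K < ν K := (measure_mono_null hKS h.measure_nullSet).symm ▸ hνK
  obtain ⟨U, hKU, hU, hμU⟩ := Set.exists_isOpen_lt_of_lt K (ν K) hμK
  obtain ⟨u, huK, huU, hu, hu01⟩ := exists_continuous_one_zero_of_isCompact hK hU.isClosed_compl
    (disjoint_compl_right_iff_subset.2 hKU)
  have hint : ∀ ρ : Measure X, [IsFiniteMeasure ρ] → Integrable u ρ :=
    fun ρ _ => u.continuous.integrable_of_hasCompactSupport hu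
  refine ⟨u, u.continuous, hu, hu01, ?_⟩
  calc ∫ x, u x ∂μ ≤ ∫ x, U.indicator 1 x ∂μ := by
        refine integral_mono (hint μ) ((integrable_const 1).indicator hU.measurableSet) fun x => ?_
        by_cases hx : x ∈ U
        · simpa [hx] using (hu01 x).2
        · simp [hx, huU hx]
    _ = μ.real U := integral_indicator_one hU.measurableSet
    _ < ν.real K := (ENNReal.toReal_lt_toReal (measure_ne_top _ _) (measure_ne_top _ _)).2 hμU
    _ = ∫ x, K.indicator 1 x ∂ν := (integral_indicator_one hK.measurableSet).symm
    _ ≤ ∫ x, u x ∂ν := by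
        refine integral_mono ((integrable_const 1).indicator hK.measurableSet) (hint ν) fun x => ?_
        by_cases hx : x ∈ K
        · simp [hx, huK hx]
        · simpa [hx] using (hu01 x).1

theorem ofReal_integral_le_lintegral_ofReal {α : Type*} [MeasurableSpace α] (μ : Measure α)
    (f : α → ℝ) : ENNReal.ofReal (∫ x, f x ∂μ) ≤ ∫⁻ x, ENNReal.ofReal (f x) ∂μ := by
  by_cases hf : Integrable f μ
  · refine (ENNReal.ofReal_le_ofReal ?_).trans ENNReal.ofReal_toReal_le
    rw [integral_eq_lintegral_pos_part_sub_lintegral_neg_part hf]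
    linarith [ENNReal.toReal_nonneg (a := ∫⁻ x, ENNReal.ofReal (-f x) ∂μ)]
  · simp [integral_undef hf]

theorem coe_integral_sub_le_lintegral_ofReal {α : Type*} [MeasurableSpace α] {ν : Measure α}
    [IsFiniteMeasure ν] (hν : ν.real univ ≤ 1) {e w : α → ℝ} (he : Integrable e ν) {c : ℝ}
    (hc : 0 ≤ c) (hew : ∀ x, e x - w x ≤ c) :
    ((∫ x, e x ∂ν - c : ℝ) : EReal) ≤ ((∫⁻ x, ENNReal.ofReal (w x) ∂ν : ℝ≥0∞) : EReal) := by
  have hsub : ∫ x, e x ∂ν - c ≤ ∫ x, (e x - c) ∂ν := by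
    rw [integral_sub he (integrable_const c), integral_const, smul_eq_mul]
    nlinarith
  calc ((∫ x, e x ∂ν - c : ℝ) : EReal)
      ≤ ((ENNReal.ofReal (∫ x, e x ∂ν - c) : ℝ≥0∞) : EReal) := by
        rw [EReal.coe_ennreal_ofReal]; exact EReal.coe_le_coe_iff.2 (le_max_left _ _)
    _ ≤ ((∫⁻ x, ENNReal.ofReal (w x) ∂ν : ℝ≥0∞) : EReal) := by
        refine EReal.coe_ennreal_le_coe_ennreal_iff.2 ?_
        calc ENNReal.ofReal (∫ x, e x ∂ν - c) ≤ ENNReal.ofReal (∫ x, (e x - c) ∂ν) :=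
              ENNReal.ofReal_le_ofReal hsub
          _ ≤ ∫⁻ x, ENNReal.ofReal (e x - c) ∂ν := ofReal_integral_le_lintegral_ofReal ν _
          _ ≤ ∫⁻ x, ENNReal.ofReal (w x) ∂ν :=
              lintegral_mono fun x => ENNReal.ofReal_le_ofReal (by linarith [hew x])

namespace CZero

def ofHasCompactSupport {g : ℝ≥0 → ℝ} (hg : Continuous g) (hgcs : HasCompactSupport g) : CZero :=
  ⟨g, hg, by simpa only [cocompact_eq_atTop] using hgcs.is_zero_at_infty⟩

/-- Via `cocompact ℝ≥0 = atTop`; this is where the boundedness of test functions comes from. -/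
def toZeroAtInfty (e : CZero) : ZeroAtInftyContinuousMap ℝ≥0 ℝ :=
  ⟨⟨e.1, e.2.1⟩, by simpa only [cocompact_eq_atTop] using e.2.2⟩

theorem integrable (e : CZero) (ν : Measure ℝ≥0) [IsFiniteMeasure ν] : Integrable e.1 ν :=
  e.toZeroAtInfty.toBCF.integrable ν

theorem bddAbove_range (e : CZero) : BddAbove (range e.1) :=
  ⟨‖e.toZeroAtInfty.toBCF‖, forall_mem_range.2 fun t =>
    (le_abs_self _).trans (e.toZeroAtInfty.toBCF.norm_coe_le_norm t)⟩

end CZero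

noncomputable def undershoot (w e : ℝ≥0 → ℝ) : ℝ := ⨆ t, max (e t - w t) 0

section Undershoot

variable {w e : ℝ≥0 → ℝ}

theorem undershoot_le {c : ℝ} (hc : 0 ≤ c) (h : ∀ t, e t - w t ≤ c) : undershoot w e ≤ c :=
  ciSup_le fun t => max_le (h t) hc

theorem le_undershoot (hw0 : ∀ t, 0 ≤ w t) (he : BddAbove (range e)) (t : ℝ≥0) :
    max (e t - w t) 0 ≤ undershoot w e := by
  obtain ⟨C, hC⟩ := he
  refine le_ciSup (f := fun s => max (e s - w s) 0)
    ⟨max C 0, forall_mem_range.2 fun s => max_le_max ?_ le_rfl⟩ t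
  linarith [hC ⟨s, rfl⟩, hw0 s]

end Undershoot

noncomputable def undershootConjugate (w : ℝ≥0 → ℝ) (μ : SignedMeasure ℝ≥0) : EReal :=
  ⨆ e : CZero, ((pairing μ e.1 - undershoot w e.1 : ℝ) : EReal)

theorem pairing_const_mul (μ : SignedMeasure ℝ≥0) (c : ℝ) (e : ℝ≥0 → ℝ) :
    pairing μ (fun t => c * e t) = c * pairing μ e := by
  simp only [pairing, integral_const_mul, mul_sub]

theorem pairing_eq_integral_posPart {μ : SignedMeasure ℝ≥0} (hμ : 0 ≤ μ) (e : ℝ≥0 → ℝ) :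
    pairing μ e = ∫ t, e t ∂μ.toJordanDecomposition.posPart := by
  rw [pairing, μ.nonneg_iff_negPart_eq_zero.1 hμ, integral_zero_measure, sub_zero]

section Conjugate

variable {w : ℝ≥0 → ℝ} {μ : SignedMeasure ℝ≥0}

theorem undershootConjugate_eq_top_of_lt (hw0 : ∀ t, 0 ≤ w t) {g : ℝ≥0 → ℝ}
    (hg : Continuous g) (hgcs : HasCompactSupport g) {c : ℝ} (hc : 0 ≤ c) (hgc : ∀ t, g t ≤ c)
    (hlt : c < pairing μ g) : undershootConjugate w μ = ⊤ := by
  refine iSup_eq_top.2 fun b hb => ?_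
  obtain ⟨M, hbM, -⟩ := EReal.exists_between_coe_real hb
  have hd : 0 < pairing μ g - c := sub_pos.2 hlt
  set k := (max M 0 + 1) / (pairing μ g - c)
  have hk : 0 ≤ k := by positivity
  have hkd : k * (pairing μ g - c) = max M 0 + 1 := div_mul_cancel₀ _ hd.ne'
  have hus : undershoot w (fun t => k * g t) ≤ k * c := undershoot_le (by positivity) fun t => by
    linarith [mul_le_mul_of_nonneg_left (hgc t) hk, hw0 t]
  refine ⟨.ofHasCompactSupport (continuous_const.mul hg) (hgcs.mul_left (f := fun _ => k)),
    hbM.trans_le (EReal.coe_le_coe_iff.2 ?_)⟩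
  change M ≤ pairing μ (fun t => k * g t) - undershoot w (fun t => k * g t)
  rw [pairing_const_mul]
  linarith [le_max_left M 0, mul_sub k (pairing μ g) c]

theorem undershootConjugate_le (hw0 : ∀ t, 0 ≤ w t) (hμ : 0 ≤ μ) (hμ1 : μ univ ≤ 1) :
    undershootConjugate w μ ≤
      ((∫⁻ t, ENNReal.ofReal (w t) ∂μ.toJordanDecomposition.posPart : ℝ≥0∞) : EReal) := by
  refine iSup_le fun e => ?_
  have hP : μ.toJordanDecomposition.posPart.real univ ≤ 1 := by
    rwa [← μ.apply_eq_posPart_real_of_nonneg hμ MeasurableSet.univ]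
  rw [pairing_eq_integral_posPart hμ]
  exact coe_integral_sub_le_lintegral_ofReal hP (e.integrable _)
    ((le_max_right _ _).trans (le_undershoot hw0 e.bddAbove_range 0))
    fun t => (le_max_left _ _).trans (le_undershoot hw0 e.bddAbove_range t)

theorem le_undershootConjugate (hw : Continuous w) (hw0 : ∀ t, 0 ≤ w t) (hμ : 0 ≤ μ) :
    ((∫⁻ t, ENNReal.ofReal (w t) ∂μ.toJordanDecomposition.posPart : ℝ≥0∞) : EReal) ≤
      undershootConjugate w μ := by
  set P := μ.toJordanDecomposition.posPart
  have hlower : ∀ n, ((∫⁻ t, ENNReal.ofReal (w t) * ENNReal.ofReal (cutoff n t) ∂P : ℝ≥0∞) : EReal)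
      ≤ undershootConjugate w μ := by
    intro n
    set e := fun t => w t * cutoff n t
    have he : Continuous e := hw.mul (continuous_cutoff n)
    have hes : HasCompactSupport e := (hasCompactSupport_cutoff n).mul_left
    have he0 : ∀ t, 0 ≤ e t := fun t => mul_nonneg (hw0 t) (cutoff_nonneg n t)
    have hus : undershoot w e ≤ 0 := undershoot_le le_rfl fun t =>
      sub_nonpos.2 (mul_le_of_le_one_right (hw0 t) (cutoff_le_one n t))
    refine le_trans ?_ (le_iSup _ (CZero.ofHasCompactSupport he hes))
    calc ((∫⁻ t, ENNReal.ofReal (w t) * ENNReal.ofReal (cutoff n t) ∂P : ℝ≥0∞) : EReal)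
        = ((∫ t, e t ∂P : ℝ) : EReal) := by
          simp_rw [← ENNReal.ofReal_mul (hw0 _)]
          rw [← ofReal_integral_eq_lintegral_ofReal (he.integrable_of_hasCompactSupport hes)
            (ae_of_all _ he0), EReal.coe_ennreal_ofReal, max_eq_left (integral_nonneg he0)]
      _ ≤ ((pairing μ e - undershoot w e : ℝ) : EReal) := by
          rw [pairing_eq_integral_posPart hμ]
          exact EReal.coe_le_coe_iff.2 (by linarith)
  rw [← iSup_lintegral_mul_cutoff P hw.measurable.ennreal_ofReal,
    EReal.coe_ennreal_strictMono.monotone.map_ciSup_of_continuousAt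
      continuous_coe_ennreal_ereal.continuousAt]
  exact iSup_le hlower

end Conjugate

theorem conjugate_undershoot_general
    (w : ℝ≥0 → ℝ) (hw : Continuous w) (hw0 : ∀ t, 0 ≤ w t)
    (μ : SignedMeasure ℝ≥0) :
    ((¬0 ≤ μ ∨ 1 < μ Set.univ) →
      (⨆ e : CZero, ((pairing μ e.1 - ⨆ t, max (e.1 t - w t) 0 : ℝ) : EReal)) = ⊤) ∧
    ((0 ≤ μ ∧ μ Set.univ ≤ 1) →
      (⨆ e : CZero, ((pairing μ e.1 - ⨆ t, max (e.1 t - w t) 0 : ℝ) : EReal))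
        = ((∫⁻ t, ENNReal.ofReal (w t) ∂μ.toJordanDecomposition.posPart : ℝ≥0∞) : EReal)) := by
  refine ⟨fun hμ => ?_, fun ⟨hμ, hμ1⟩ =>
    le_antisymm (undershootConjugate_le hw0 hμ hμ1) (le_undershootConjugate hw hw0 hμ)⟩
  by_cases hμ0 : 0 ≤ μ
  · have hP : 1 < μ.toJordanDecomposition.posPart univ := by
      have h1 := hμ.resolve_left (not_not.2 hμ0)
      rw [μ.apply_eq_posPart_real_of_nonneg hμ0 MeasurableSet.univ] at h1
      exact (ENNReal.one_lt_ofReal.2 h1).trans_le ENNReal.ofReal_toReal_le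
    obtain ⟨n, hn⟩ := exists_one_lt_integral_cutoff _ hP
    exact undershootConjugate_eq_top_of_lt hw0 (continuous_cutoff n) (hasCompactSupport_cutoff n)
      zero_le_one (cutoff_le_one n) ((pairing_eq_integral_posPart hμ0 _).symm ▸ hn)
  · obtain ⟨u, hu, huc, hu01, hlt⟩ := exists_integral_lt_integral_of_mutuallySingular
      μ.toJordanDecomposition.mutuallySingular
      (mt μ.nonneg_iff_negPart_eq_zero.2 hμ0)
    refine undershootConjugate_eq_top_of_lt hw0 (g := fun t => -u t) hu.neg huc.neg le_rfl
      (fun t => neg_nonpos.2 (hu01 t).1) ?_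
    simp only [pairing, integral_neg]
    linarith

/-- Let `w ≥ 0` be continuous on `[0,∞)` and let
`f_us(e) = sup_{t≥0} max(e t - w t, 0)` be the undershoot functional on `C₀(ℝ₊)`.
For a finite signed regular Borel measure `μ` on `[0,∞)`:
if `μ` is not nonnegative or `μ([0,∞)) > 1`, then
`f_us*(μ) = sup_{e ∈ C₀} (∫₀^∞ e dμ - f_us(e)) = +∞`; and if `μ ≥ 0` with
`μ([0,∞)) ≤ 1`, then `f_us*(μ) = ∫₀^∞ w dμ`, a value in `[0,+∞]`. -/
theorem conjugate_undershoot
    (w : ℝ≥0 → ℝ) (hw : Continuous w) (hw0 : ∀ t, 0 ≤ w t)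
    (μ : SignedMeasure ℝ≥0) (hreg : μ.totalVariation.Regular) :
    ((¬0 ≤ μ ∨ 1 < μ Set.univ) →
      (⨆ e : CZero, ((pairing μ e.1 - ⨆ t, max (e.1 t - w t) 0 : ℝ) : EReal)) = ⊤) ∧
    ((0 ≤ μ ∧ μ Set.univ ≤ 1) →
      (⨆ e : CZero, ((pairing μ e.1 - ⨆ t, max (e.1 t - w t) 0 : ℝ) : EReal))
        = ((∫⁻ t, ENNReal.ofReal (w t) ∂μ.toJordanDecomposition.posPart : ℝ≥0∞) : EReal)) :=
  conjugate_undershoot_general w hw hw0 μ
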